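/- arXiv:2111.13240 — 2 statements merged into one kernel-verified Lean document; each statement's English description precedes it below -/
import Mathlib

section
/- Let G be a weighted digraph, let h be a positive integer, and let R ⊆ V be a set of vertices such that every directed path in the weighted transitive closure G*_ω with at least h hops and all of whose vertices lie in R has length strictly greater than dist_G between its endpoints. Let H' be any set of edges from G*_ω (each edge (x,y) ∈ H' weighted dist_G(x,y)). Then every shortest u-v path in G ∪ H' contains at most h vertices of R. -/
namespace Paper

variable {V : Type*}

/-- `IsWalk E u v l` : `l` is the list of vertices visited after `u` on a
directed walk from `u` to `v` in the digraph with edge relation `E`.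
The number of edges of the walk is `l.length`. -/
def IsWalk (E : V → V → Prop) : V → V → List V → Prop
  | u, v, [] => u = v
  | u, v, x :: xs => E u x ∧ IsWalk E x v xs

/-- `v` is reachable from `u` by a directed walk (possibly trivial). -/
def Reach (E : V → V → Prop) (u v : V) : Prop := ∃ l, IsWalk E u v l

/-- The transitive closure `G*`: pairs `(u,v)` with `u ≠ v` and `v` reachable from `u`. -/
def TC (E : V → V → Prop) (u v : V) : Prop := u ≠ v ∧ Reach E u v

/-- `dist E u v` : minimum number of edges on a directed walk from `u` to `v`. -/
noncomputable def dist (E : V → V → Prop) (u v : V) : ℕ :=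
  sInf {k | ∃ l, IsWalk E u v l ∧ l.length = k}

/-- The digraph `G ∪ H` obtained by adding the edge set `H` to `E`. -/
def addE (E : V → V → Prop) (H : Finset (V × V)) : V → V → Prop :=
  fun a b => E a b ∨ (a, b) ∈ H


/-- `wlen w u l` : total weight of the walk starting at `u` visiting the vertices of
`l` in order, with edge-weight function `w`. -/
def wlen (w : V → V → ℝ) : V → List V → ℝ
  | _, [] => 0
  | u, x :: xs => w u x + wlen w x xs

/-- `wdist E w u v` : the weighted distance from `u` to `v`, the infimum of the
weights of all directed `u`-`v` walks. -/
noncomputable def wdist (E : V → V → Prop) (w : V → V → ℝ) (u v : V) : ℝ :=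
  sInf {r | ∃ l, IsWalk E u v l ∧ wlen w u l = r}

/-- The weights are integers in `[1, W]`. -/
def IntWeights (E : V → V → Prop) (w : V → V → ℝ) (W : ℕ) : Prop :=
  ∀ u v : V, E u v → ∃ m : ℕ, 1 ≤ m ∧ m ≤ W ∧ w u v = (m : ℝ)

/-- The weight function of `G ∪ H`, where each hopset edge `(u,v) ∈ H` is weighted by
`dist_G(u,v)`. -/
noncomputable def hopW [DecidableEq V] (E : V → V → Prop) (w : V → V → ℝ)
    (H : Finset (V × V)) : V → V → ℝ :=
  fun a b => if (a, b) ∈ H then wdist E w a b else w a b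

/-- `H` is a `(β,ε)`-hopset for the weighted digraph `(E,w)`: a set of edges of the
transitive closure, each `(u,v)` weighted `dist_G(u,v)`, such that for every pair
`u,v` with `v` reachable from `u`, no walk in `G ∪ H` is shorter than `dist_G(u,v)`,
and some walk in `G ∪ H` with at most `β` hops has weight at most
`(1+ε)·dist_G(u,v)`. -/
def IsHopset [DecidableEq V] (E : V → V → Prop) (w : V → V → ℝ)
    (β : ℕ) (ε : ℝ) (H : Finset (V × V)) : Prop :=
  (∀ e ∈ H, TC E e.1 e.2) ∧
  ∀ u v : V, TC E u v →
    (∀ l, IsWalk (addE E H) u v l → l.length ≤ β →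
      wdist E w u v ≤ wlen (hopW E w H) u l) ∧
    (∃ l, IsWalk (addE E H) u v l ∧ l.length ≤ β ∧
      wlen (hopW E w H) u l ≤ (1 + ε) * wdist E w u v)

/-- `FPath R p` : `p` lists the `m+1` vertices of a directed path with `m` hops in the
digraph with edge relation `R` (distinct vertices, consecutive edges in `R`). -/
def FPath (R : V → V → Prop) {m : ℕ} (p : Fin (m + 1) → V) : Prop :=
  Function.Injective p ∧ ∀ i : Fin m, R (p i.castSucc) (p i.succ)

/-- `fLen w p` : the length (total weight) of the path `p` under edge weights `w`. -/
noncomputable def fLen (w : V → V → ℝ) {m : ℕ} (p : Fin (m + 1) → V) : ℝ :=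
  ∑ i : Fin m, w (p i.castSucc) (p i.succ)

/-!
List the vertices of `R` on a shortest `u`-`v` walk in `G ∪ H'` once each, in the order of the
walk: consecutive ones are distinct and reachable, so they form a path in `G*_ω`. Every edge of
`G ∪ H'` is at least as long as the `G`-distance between its ends, and `G ∪ H'` does not shorten
`G`-distances, so this path is no longer than the `G`-distance between its endpoints. With more
than `h` vertices it would contradict the hypothesis on `R`.
-/

section Walks

variable {E E' : V → V → Prop}

theorem isWalk_append {u x v : V} {l₁ l₂ : List V} (h₁ : IsWalk E u x l₁)
    (h₂ : IsWalk E x v l₂) : IsWalk E u v (l₁ ++ l₂) := by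
  induction l₁ generalizing u with
  | nil => cases h₁; exact h₂
  | cons y ys ih => exact ⟨h₁.1, ih h₁.2⟩

theorem IsWalk.getLastD_eq {u v : V} {l : List V} (h : IsWalk E u v l) : l.getLastD u = v := by
  induction l generalizing u with
  | nil => exact h
  | cons y ys ih => rw [List.getLastD_cons]; exact ih h.2

theorem IsWalk.mono (hE : ∀ a b, E a b → E' a b) {u v : V} {l : List V}
    (h : IsWalk E u v l) : IsWalk E' u v l := by
  induction l generalizing u with
  | nil => exact h
  | cons y ys ih => exact ⟨hE _ _ h.1, ih h.2⟩

theorem Reach.refl (u : V) : Reach E u u := ⟨[], rfl⟩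

theorem Reach.trans {u x v : V} (h₁ : Reach E u x) (h₂ : Reach E x v) : Reach E u v :=
  let ⟨l₁, hl₁⟩ := h₁
  let ⟨l₂, hl₂⟩ := h₂
  ⟨l₁ ++ l₂, isWalk_append hl₁ hl₂⟩

theorem Reach.of_pairwise_cons {x y : V} {l : List V} (h : (x :: l).Pairwise (Reach E))
    (hy : y ∈ x :: l) : Reach E x y := by
  rcases List.mem_cons.mp hy with rfl | hy
  · exact Reach.refl y
  · exact List.rel_of_pairwise_cons h hy

theorem IsWalk.pairwise_reach (hE' : ∀ a b, E' a b → Reach E a b) {u v : V} {p : List V}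
    (h : IsWalk E' u v p) : ((u :: p) ++ [v]).Pairwise (Reach E) := by
  induction p generalizing u with
  | nil =>
    obtain rfl : u = v := h
    simpa using Reach.refl u
  | cons x xs ih =>
    have hx := ih h.2
    refine List.Pairwise.cons (fun y hy => ?_) hx
    exact (hE' u x h.1).trans (Reach.of_pairwise_cons hx hy)

end Walks

section Lengths

variable {E E' : V → V → Prop} {w w' : V → V → ℝ}

theorem wlen_append (w : V → V → ℝ) (u : V) (l₁ l₂ : List V) :
    wlen w u (l₁ ++ l₂) = wlen w u l₁ + wlen w (l₁.getLastD u) l₂ := by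
  induction l₁ generalizing u with
  | nil => simp [wlen]
  | cons y ys ih => simp only [List.cons_append, wlen, ih, List.getLastD_cons, add_assoc]

theorem wlen_nonneg (hw : ∀ a b, E a b → 0 ≤ w a b) {u v : V} {l : List V}
    (h : IsWalk E u v l) : 0 ≤ wlen w u l := by
  induction l generalizing u with
  | nil => exact le_rfl
  | cons y ys ih => exact add_nonneg (hw _ _ h.1) (ih h.2)

theorem wlen_mono (hle : ∀ a b, E a b → w' a b ≤ w a b) {u v : V} {l : List V}
    (h : IsWalk E u v l) : wlen w' u l ≤ wlen w u l := by
  induction l generalizing u with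
  | nil => exact le_rfl
  | cons y ys ih => exact add_le_add (hle _ _ h.1) (ih h.2)

theorem le_wdist {u v : V} {c : ℝ} (huv : Reach E u v)
    (h : ∀ l, IsWalk E u v l → c ≤ wlen w u l) : c ≤ wdist E w u v := by
  obtain ⟨l, hl⟩ := huv
  exact le_csInf ⟨_, l, hl, rfl⟩ (by rintro _ ⟨l, hl, rfl⟩; exact h l hl)

section Nonneg

variable (hw : ∀ a b, E a b → 0 ≤ w a b)
include hw

theorem wdist_le_wlen {u v : V} {l : List V} (h : IsWalk E u v l) :
    wdist E w u v ≤ wlen w u l :=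
  csInf_le ⟨0, by rintro _ ⟨l, hl, rfl⟩; exact wlen_nonneg hw hl⟩ ⟨l, h, rfl⟩

theorem wdist_nonneg (u v : V) : 0 ≤ wdist E w u v :=
  Real.sInf_nonneg (by rintro _ ⟨l, hl, rfl⟩; exact wlen_nonneg hw hl)

theorem wdist_self (u : V) : wdist E w u u = 0 :=
  (wdist_le_wlen hw (show IsWalk E u u [] from rfl)).antisymm (wdist_nonneg hw u u)

theorem wdist_le_of_adj {a b : V} (h : E a b) : wdist E w a b ≤ w a b := by
  simpa [wlen] using wdist_le_wlen hw (show IsWalk E a b [b] from ⟨h, rfl⟩)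

theorem wdist_triangle {u x v : V} (hux : Reach E u x) (hxv : Reach E x v) :
    wdist E w u v ≤ wdist E w u x + wdist E w x v := by
  have hsplit : ∀ l₁, IsWalk E u x l₁ → ∀ l₂, IsWalk E x v l₂ →
      wdist E w u v ≤ wlen w u l₁ + wlen w x l₂ := fun l₁ hl₁ l₂ hl₂ => by
    have := wdist_le_wlen hw (isWalk_append hl₁ hl₂)
    rwa [wlen_append, hl₁.getLastD_eq] at this
  have h₁ : ∀ l₁, IsWalk E u x l₁ → wdist E w u v - wlen w u l₁ ≤ wdist E w x v :=
    fun l₁ hl₁ => le_wdist hxv fun l₂ hl₂ => by linarith [hsplit l₁ hl₁ l₂ hl₂]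
  have h₂ : wdist E w u v - wdist E w x v ≤ wdist E w u x :=
    le_wdist hux fun l₁ hl₁ => by linarith [h₁ l₁ hl₁]
  linarith

-- The auxiliary start `x`, with `x` reaching `u`, makes the statement inductive along the walk.
theorem wlen_wdist_le_of_sublist (hE' : ∀ a b, E' a b → Reach E a b ∧ wdist E w a b ≤ w' a b)
    {v : V} {p s : List V} {u x : V} (hp : IsWalk E' u v p) (hs : s.Sublist (u :: p))
    (hxu : Reach E x u) :
    wlen (wdist E w) x (s ++ [v]) ≤ wdist E w x u + wlen w' u p := by
  induction p generalizing u x s with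
  | nil =>
    obtain rfl : u = v := hp
    rcases List.sublist_cons_iff.mp hs with hs' | ⟨s', rfl, hs'⟩ <;>
      simp_all [wlen, wdist_self hw]
  | cons y ys ih =>
    obtain ⟨huy_reach, huy⟩ := hE' u y hp.1
    rcases List.sublist_cons_iff.mp hs with hs' | ⟨s', rfl, hs'⟩
    · have := ih hp.2 hs' (hxu.trans huy_reach)
      have := wdist_triangle hw hxu huy_reach
      simp only [wlen]
      linarith
    · have := ih hp.2 hs' huy_reach
      simp only [List.cons_append, wlen]
      linarith

end Nonneg

end Lengths

section Hopset

variable {E : V → V → Prop} {w : V → V → ℝ} {H' : Finset (V × V)}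

theorem reach_of_addE (hH' : ∀ e ∈ H', TC E e.1 e.2) {a b : V} (h : addE E H' a b) :
    Reach E a b :=
  h.elim (fun h => ⟨[b], h, rfl⟩) (fun h => (hH' (a, b) h).2)

variable [DecidableEq V] (hw : ∀ a b, E a b → 0 ≤ w a b)
include hw

theorem wdist_le_hopW {a b : V} (h : addE E H' a b) : wdist E w a b ≤ hopW E w H' a b := by
  unfold hopW
  split_ifs with hab
  · exact le_rfl
  · exact wdist_le_of_adj hw (h.resolve_right hab)

theorem hopW_le {a b : V} (h : E a b) : hopW E w H' a b ≤ w a b := by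
  unfold hopW
  split_ifs
  · exact wdist_le_of_adj hw h
  · exact le_rfl

theorem wdist_addE_le {u v : V} (huv : Reach E u v) :
    wdist (addE E H') (hopW E w H') u v ≤ wdist E w u v :=
  le_wdist huv fun _ hl =>
    (wdist_le_wlen (fun _ _ h => (wdist_nonneg hw _ _).trans (wdist_le_hopW hw h))
      (hl.mono fun _ _ => Or.inl)).trans (wlen_mono (fun _ _ => hopW_le hw) hl)

theorem wlen_wdist_le_wdist_of_sublist_of_shortest (hH' : ∀ e ∈ H', TC E e.1 e.2)
    {u v a : V} {p t : List V} (hp : IsWalk (addE E H') u v p)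
    (hshort : wlen (hopW E w H') u p = wdist (addE E H') (hopW E w H') u v)
    (hsub : (a :: t).Sublist (u :: p)) :
    wlen (wdist E w) a t ≤ wdist E w a (t.getLastD a) := by
  have hlower := wlen_wdist_le_of_sublist hw
    (fun _ _ h => ⟨reach_of_addE hH' h, wdist_le_hopW hw h⟩) hp hsub (Reach.refl u)
  rw [wdist_self hw, zero_add, hshort, List.cons_append, wlen, wlen_append] at hlower
  simp only [wlen, add_zero] at hlower
  set z := t.getLastD a
  obtain ⟨hpu, -, hto_v⟩ := List.pairwise_append.mp (hp.pairwise_reach fun _ _ => reach_of_addE hH')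
  have hua : Reach E u a := Reach.of_pairwise_cons hpu (hsub.subset List.mem_cons_self)
  have haz : Reach E a z := Reach.of_pairwise_cons (hpu.sublist hsub) List.getLastD_mem_cons
  have hzv : Reach E z v :=
    hto_v z (hsub.subset List.getLastD_mem_cons) v (List.mem_singleton_self v)
  have := wdist_addE_le (H' := H') hw (hua.trans (haz.trans hzv))
  have := wdist_triangle hw hua (haz.trans hzv)
  have := wdist_triangle hw haz hzv
  linarith

end Hopset

section Paths

theorem fPath_get_of_pairwise {Rel : V → V → Prop} {a : V} {t : List V}
    (h : (a :: t).Pairwise Rel) (hnd : (a :: t).Nodup) : FPath Rel (a :: t).get :=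
  ⟨List.nodup_iff_injective_get.mp hnd,
    fun i => List.pairwise_iff_get.mp h i.castSucc i.succ (Fin.castSucc_lt_succ)⟩

theorem fLen_get (w : V → V → ℝ) (a : V) (t : List V) :
    fLen w (a :: t).get = wlen w a t := by
  induction t generalizing a with
  | nil => simp [fLen, wlen]
  | cons b t ih =>
    simp only [fLen, wlen, ← ih]
    exact Fin.sum_univ_succ _

theorem get_last_cons (a : V) (t : List V) :
    (a :: t).get (Fin.last t.length) = t.getLastD a := by
  induction t generalizing a with
  | nil => rfl
  | cons b t ih => rw [List.getLastD_cons, ← ih]; rfl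

theorem exists_nodup_sublist_length_eq_card_filter [DecidableEq V] (l : List V) (S : Finset V) :
    ∃ r : List V, r.Sublist l ∧ r.Nodup ∧ (∀ x ∈ r, x ∈ S) ∧
      r.length = (l.toFinset.filter (· ∈ S)).card := by
  refine ⟨l.dedup.filter (· ∈ S), List.filter_sublist.trans (List.dedup_sublist l),
    (List.nodup_dedup l).filter _, fun x hx => by simpa using (List.mem_filter.mp hx).2, ?_⟩
  rw [← List.toFinset_card_of_nodup ((List.nodup_dedup l).filter _)]
  congr 1
  ext x
  simp

end Paths

theorem shortest_path_few_vertices_outside_general (n h : ℕ)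
    (E : Fin n → Fin n → Prop) (w : Fin n → Fin n → ℝ)
    (hw : ∀ u v : Fin n, E u v → 0 < w u v)
    (R : Finset (Fin n))
    (hR : ∀ m : ℕ, h ≤ m → ∀ q : Fin (m + 1) → Fin n, FPath (TC E) q →
      (∀ x : Fin (m + 1), q x ∈ R) →
      wdist E w (q 0) (q (Fin.last m)) < fLen (wdist E w) q)
    (H' : Finset (Fin n × Fin n)) (hH' : ∀ e ∈ H', TC E e.1 e.2)
    (u v : Fin n) (p : List (Fin n))
    (hwalk : IsWalk (addE E H') u v p)
    (hshort : wlen (hopW E w H') u p = wdist (addE E H') (hopW E w H') u v) :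
    ((u :: p).toFinset.filter (· ∈ R)).card ≤ h := by
  obtain ⟨r, hsub, hnd, hmemR, hlen⟩ := exists_nodup_sublist_length_eq_card_filter (u :: p) R
  rw [← hlen]
  by_contra! hlong
  obtain ⟨a, t, rfl⟩ := List.exists_cons_of_length_pos (by omega : 0 < r.length)
  have hpairwise : (a :: t).Pairwise (TC E) := hnd.and
    ((List.pairwise_append.mp (hwalk.pairwise_reach fun _ _ => reach_of_addE hH')).1.sublist hsub)
  have hlt := hR t.length (by simp at hlong; omega) _ (fPath_get_of_pairwise hpairwise hnd)
    fun i => hmemR _ (List.get_mem _ _)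
  rw [fLen_get, get_last_cons] at hlt
  exact hlt.not_ge (wlen_wdist_le_wdist_of_sublist_of_shortest (fun a b hab => (hw a b hab).le)
    hH' hwalk hshort hsub)

/-- Let `G` be a weighted digraph, `h` a positive integer, and
`R ⊆ V` a set of vertices such that every directed path in the weighted transitive
closure `G*_ω` with at least `h` hops and all of whose vertices lie in `R` has length
strictly greater than the `G`-distance between its endpoints. Let `H'` be any set of
edges from `G*_ω`, each `(x,y) ∈ H'` weighted `dist_G(x,y)`. Then every shortest
`u`-`v` path in `G ∪ H'` contains at most `h` vertices of `R`. -/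
theorem shortest_path_few_vertices_outside (n h : ℕ) (hh : 1 ≤ h)
    (E : Fin n → Fin n → Prop) (w : Fin n → Fin n → ℝ)
    (hw : ∀ u v : Fin n, E u v → 0 < w u v)
    (R : Finset (Fin n))
    (hR : ∀ m : ℕ, h ≤ m → ∀ q : Fin (m + 1) → Fin n, FPath (TC E) q →
      (∀ x : Fin (m + 1), q x ∈ R) →
      wdist E w (q 0) (q (Fin.last m)) < fLen (wdist E w) q)
    (H' : Finset (Fin n × Fin n)) (hH' : ∀ e ∈ H', TC E e.1 e.2)
    (u v : Fin n) (p : List (Fin n))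
    (hwalk : IsWalk (addE E H') u v p)
    (hshort : wlen (hopW E w H') u p = wdist (addE E H') (hopW E w H') u v) :
    ((u :: p).toFinset.filter (· ∈ R)).card ≤ h :=
  shortest_path_few_vertices_outside_general n h E w hw R hR H' hH' u v p hwalk hshort

end Paper
end

section
/- There is an absolute constant C such that for every n-vertex digraph G and every integer D with 1 ≤ D ≤ n, there exists a shortcut set H ⊆ G* with |H| ≤ C · (n/D)² · (log n)² such that dist_{G∪H}(u,v) ≤ D for every pair (u,v) ∈ G*. -/
namespace Paper

variable {V : Type*}

lemma isWalk_append_s17 {E : V → V → Prop} :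
    ∀ {u v w : V} {l l' : List V}, IsWalk E u v l → IsWalk E v w l' →
      IsWalk E u w (l ++ l')
  | u, v, w, [], l', h, h' => by cases h; simpa using h'
  | u, v, w, x :: xs, l', h, h' => ⟨h.1, isWalk_append_s17 h.2 h'⟩

lemma reach_refl (E : V → V → Prop) (u : V) : Reach E u u := ⟨[], rfl⟩

lemma reach_trans {E : V → V → Prop} {u v w : V} (h : Reach E u v) (h' : Reach E v w) :
    Reach E u w := by
  obtain ⟨l, hl⟩ := h; obtain ⟨l', hl'⟩ := h'
  exact ⟨l ++ l', isWalk_append_s17 hl hl'⟩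

lemma dist_le_of_walk {E : V → V → Prop} {u v : V} {l : List V} (h : IsWalk E u v l) :
    dist E u v ≤ l.length := Nat.sInf_le ⟨l, h, rfl⟩

lemma exists_walk_dist {E : V → V → Prop} {u v : V} (h : Reach E u v) :
    ∃ l, IsWalk E u v l ∧ l.length = dist E u v := by
  have hne : {k | ∃ l, IsWalk E u v l ∧ l.length = k}.Nonempty := by
    obtain ⟨l, hl⟩ := h; exact ⟨l.length, l, hl, rfl⟩
  exact Nat.sInf_mem hne

lemma reach_of_dist_pos {E : V → V → Prop} {u v : V} (h : 1 ≤ dist E u v) :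
    Reach E u v := by
  by_contra hc
  have : {k | ∃ l, IsWalk E u v l ∧ l.length = k} = ∅ := by
    ext k; simp only [Set.mem_setOf_eq, Set.mem_empty_iff_false, iff_false]
    rintro ⟨l, hl, -⟩; exact hc ⟨l, hl⟩
  rw [dist, this, Nat.sInf_empty] at h; omega

lemma dist_triangle {E : V → V → Prop} {u s v : V} (h : Reach E u s) (h' : Reach E s v) :
    dist E u v ≤ dist E u s + dist E s v := by
  obtain ⟨l, hl, hlen⟩ := exists_walk_dist h
  obtain ⟨l', hl', hlen'⟩ := exists_walk_dist h'
  have := dist_le_of_walk (isWalk_append_s17 hl hl')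
  simpa [hlen, hlen'] using this

lemma isWalk_mono {E E' : V → V → Prop} (hE : ∀ a b, E a b → E' a b) :
    ∀ {u v : V} {l : List V}, IsWalk E u v l → IsWalk E' u v l
  | u, v, [], h => h
  | u, v, x :: xs, h => ⟨hE _ _ h.1, isWalk_mono hE h.2⟩

lemma walk_take_drop {E : V → V → Prop} :
    ∀ {u v : V} (l : List V), IsWalk E u v l → ∀ i : ℕ,
      ∃ w, IsWalk E u w (l.take i) ∧ IsWalk E w v (l.drop i)
  | u, v, [], h, i => ⟨u, by simp [IsWalk], by simpa [IsWalk] using h⟩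
  | u, v, x :: xs, h, 0 => ⟨u, rfl, h⟩
  | u, v, x :: xs, h, i + 1 => by
    obtain ⟨w, h1, h2⟩ := walk_take_drop xs h.2 i
    exact ⟨w, ⟨h.1, h1⟩, h2⟩

lemma dist_split {E : V → V → Prop} {u v : V} (h : Reach E u v) {i : ℕ}
    (hi : i ≤ dist E u v) :
    ∃ w, dist E u w = i ∧ dist E w v = dist E u v - i ∧ Reach E u w ∧ Reach E w v := by
  obtain ⟨l, hl, hlen⟩ := exists_walk_dist h
  obtain ⟨w, h1, h2⟩ := walk_take_drop l hl i
  have hu : dist E u w ≤ i := by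
    have := dist_le_of_walk h1
    rw [List.length_take, hlen, min_eq_left hi] at this
    exact this
  have hv : dist E w v ≤ dist E u v - i := by
    have := dist_le_of_walk h2
    simpa [List.length_drop, hlen] using this
  have htri := dist_triangle ⟨_, h1⟩ (⟨_, h2⟩ : Reach E w v)
  exact ⟨w, by omega, by omega, ⟨_, h1⟩, ⟨_, h2⟩⟩

lemma dist_eq_zero_iff {E : V → V → Prop} {u v : V} (h : Reach E u v) :
    dist E u v = 0 → u = v := by
  intro h0
  obtain ⟨l, hl, hlen⟩ := exists_walk_dist h
  rw [h0] at hlen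
  cases l with
  | nil => exact hl
  | cons x xs => simp at hlen


lemma reach_mono {E E' : V → V → Prop} (hE : ∀ a b, E a b → E' a b) {u v : V}
    (h : Reach E u v) : Reach E' u v := by
  obtain ⟨l, hl⟩ := h
  exact ⟨l, isWalk_mono hE hl⟩

/-- relational injection card bound -/
lemma card_le_of_rel {α β : Type*} [DecidableEq β] (s : Finset α) (t : Finset β)
    (P : α → β → Prop) (h : ∀ a ∈ s, ∃ b ∈ t, P a b)
    (hinj : ∀ a₁ a₂ b, a₁ ∈ s → a₂ ∈ s → P a₁ b → P a₂ b → a₁ = a₂) :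
    s.card ≤ t.card := by
  classical
  induction s using Finset.induction_on generalizing t with
  | empty => simp
  | @insert a s ha ih =>
    obtain ⟨b, hb, hPb⟩ := h a (Finset.mem_insert_self a s)
    have hs : ∀ a' ∈ s, ∃ b' ∈ t.erase b, P a' b' := by
      intro a' ha'
      obtain ⟨b', hb', hPb'⟩ := h a' (Finset.mem_insert_of_mem ha')
      refine ⟨b', Finset.mem_erase.2 ⟨?_, hb'⟩, hPb'⟩
      rintro rfl
      exact ha (hinj a' a b' (Finset.mem_insert_of_mem ha') (Finset.mem_insert_self a s)
        hPb' hPb ▸ ha')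
    have := ih (t.erase b) hs (fun a₁ a₂ b' h1 h2 => hinj a₁ a₂ b'
      (Finset.mem_insert_of_mem h1) (Finset.mem_insert_of_mem h2))
    have hbt := Finset.card_erase_add_one hb
    rw [Finset.card_insert_of_notMem ha]
    omega

section Greedy
variable {α : Type*} [Fintype α] [DecidableEq α]

lemma greedy_step (k : ℕ) (F : Finset (Finset α)) (hne : F.Nonempty)
    (hk : ∀ A ∈ F, k ≤ A.card) [Nonempty α] :
    ∃ x : α, Fintype.card α * (F.filter (fun A => x ∉ A)).card + k * F.card ≤
      Fintype.card α * F.card := by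
  classical
  set n := Fintype.card α
  set m := F.card
  have hsum : k * m ≤ ∑ A ∈ F, A.card := by
    calc k * m = ∑ _A ∈ F, k := by rw [Finset.sum_const, smul_eq_mul, mul_comm]
    _ ≤ ∑ A ∈ F, A.card := Finset.sum_le_sum hk
  have hswap : ∑ A ∈ F, A.card = ∑ x : α, (F.filter (fun A => x ∈ A)).card := by
    calc ∑ A ∈ F, A.card
        = ∑ A ∈ F, ∑ x : α, if x ∈ A then 1 else 0 := by
          refine Finset.sum_congr rfl fun A _ => ?_
          rw [← Finset.card_filter]
          congr 1
          simp
      _ = ∑ x : α, ∑ A ∈ F, if x ∈ A then 1 else 0 := Finset.sum_comm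
      _ = ∑ x : α, (F.filter (fun A => x ∈ A)).card := by
          refine Finset.sum_congr rfl fun x _ => (Finset.card_filter _ _).symm
  have hex : ∃ x : α, k * m ≤ n * (F.filter (fun A => x ∈ A)).card := by
    by_contra hc
    push_neg at hc
    have : ∑ x : α, n * (F.filter (fun A => x ∈ A)).card < ∑ _x : α, k * m := by
      apply Finset.sum_lt_sum_of_nonempty Finset.univ_nonempty (fun x _ => hc x)
    rw [← Finset.mul_sum, ← hswap, Finset.sum_const, Finset.card_univ, smul_eq_mul] at this
    nlinarith [hsum]
  obtain ⟨x, hx⟩ := hex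
  refine ⟨x, ?_⟩
  have hsplit : (F.filter (fun A => x ∉ A)).card + (F.filter (fun A => x ∈ A)).card = m := by
    rw [add_comm]; exact Finset.card_filter_add_card_filter_not _
  nlinarith [hsplit, hx]

lemma greedy_hit [Nonempty α] (k : ℕ) :
    ∀ (t : ℕ) (F : Finset (Finset α)), (∀ A ∈ F, k ≤ A.card) →
      (F.card : ℝ) * (((Fintype.card α : ℝ) - k) / (Fintype.card α : ℝ)) ^ t < 1 →
      ∃ S : Finset α, S.card ≤ t ∧ ∀ A ∈ F, ∃ x ∈ S, x ∈ A := by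
  classical
  set n := Fintype.card α with hn
  have hn0 : 0 < n := Fintype.card_pos
  intro t
  induction t with
  | zero =>
    intro F hF h
    simp only [pow_zero, mul_one] at h
    have : F.card = 0 := by exact_mod_cast Nat.lt_one_iff.1 (by exact_mod_cast h)
    refine ⟨∅, le_refl _, ?_⟩
    intro A hA
    simp [Finset.card_eq_zero.1 this] at hA
  | succ t ih =>
    intro F hF h
    rcases F.eq_empty_or_nonempty with rfl | hne
    · exact ⟨∅, Nat.zero_le _, by simp⟩
    have hkn : k ≤ n := by
      obtain ⟨A, hA⟩ := hne
      exact le_trans (hF A hA) (le_trans (Finset.card_le_univ A) (by simp [hn]))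
    obtain ⟨x, hx⟩ := greedy_step k F hne hF
    set F₂ := F.filter (fun A => x ∉ A) with hF₂
    have hr0 : (0:ℝ) ≤ ((n : ℝ) - k) / n := by
      apply div_nonneg _ (by positivity)
      have : (k:ℝ) ≤ n := by exact_mod_cast hkn
      linarith
    have hcard2 : (F₂.card : ℝ) ≤ (((n:ℝ) - k) / n) * F.card := by
      rw [div_mul_eq_mul_div, le_div_iff₀ (by exact_mod_cast hn0)]
      have : (n * F₂.card + k * F.card : ℝ) ≤ n * F.card := by exact_mod_cast hx
      linarith
    have h2 : (F₂.card : ℝ) * (((n : ℝ) - k) / n) ^ t < 1 := by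
      calc (F₂.card : ℝ) * (((n : ℝ) - k) / n) ^ t
          ≤ ((((n:ℝ) - k) / n) * F.card) * (((n : ℝ) - k) / n) ^ t := by
            apply mul_le_mul_of_nonneg_right hcard2 (pow_nonneg hr0 t)
        _ = (F.card : ℝ) * (((n : ℝ) - k) / n) ^ (t + 1) := by ring
        _ < 1 := h
    obtain ⟨S₂, hS₂card, hS₂⟩ := ih F₂ (fun A hA => hF A (Finset.mem_filter.1 hA).1) h2
    refine ⟨insert x S₂, le_trans (Finset.card_insert_le _ _) (by omega), ?_⟩
    intro A hA
    by_cases hxA : x ∈ A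
    · exact ⟨x, Finset.mem_insert_self _ _, hxA⟩
    · obtain ⟨y, hy, hyA⟩ := hS₂ A (Finset.mem_filter.2 ⟨hA, hxA⟩)
      exact ⟨y, Finset.mem_insert_of_mem hy, hyA⟩

lemma hitting_set [Nonempty α] (k : ℕ) (hk : 1 ≤ k) (F : Finset (Finset α))
    (hF : ∀ A ∈ F, k ≤ A.card) :
    ∃ S : Finset α, (S.card : ℝ) ≤ ((Fintype.card α : ℝ) / k) * Real.log F.card + 1 ∧
      ∀ A ∈ F, ∃ x ∈ S, x ∈ A := by
  classical
  set n := Fintype.card α with hn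
  have hn0 : 0 < n := Fintype.card_pos
  set m := F.card with hm
  set t : ℕ := ⌊((n : ℝ) / k) * Real.log m⌋₊ + 1 with ht
  have hlogm : 0 ≤ Real.log m := Real.log_natCast_nonneg m
  have hval : (0:ℝ) ≤ ((n : ℝ) / k) * Real.log m := by positivity
  have hcond : (m : ℝ) * (((n : ℝ) - k) / n) ^ t < 1 := by
    rcases Nat.eq_zero_or_pos m with hm0 | hm1
    · rw [hm0]; norm_num
    have hkn : k ≤ n := by
      obtain ⟨A, hA⟩ := Finset.card_pos.1 hm1
      exact le_trans (hF A hA) (le_trans (Finset.card_le_univ A) (by simp [hn]))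
    have hr1 : ((n : ℝ) - k) / n ≤ Real.exp (-(k / n)) := by
      have := Real.add_one_le_exp (-(k / n : ℝ))
      have hne : (n:ℝ) ≠ 0 := by positivity
      have : 1 - (k:ℝ)/n ≤ Real.exp (-(k/n)) := by linarith
      calc ((n : ℝ) - k) / n = 1 - (k:ℝ)/n := by field_simp
        _ ≤ _ := this
    have hr0 : (0:ℝ) ≤ ((n : ℝ) - k) / n := by
      apply div_nonneg _ (by positivity)
      have : (k:ℝ) ≤ n := by exact_mod_cast hkn
      linarith
    have hpow : (((n : ℝ) - k) / n) ^ t ≤ Real.exp (-(k / n : ℝ)) ^ t :=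
      pow_le_pow_left₀ hr0 hr1 t
    have hexp : Real.exp (-(k / n : ℝ)) ^ t = Real.exp (-(k / n : ℝ) * t) := by
      rw [← Real.exp_nat_mul]; ring_nf
    have hm1' : (1:ℝ) ≤ m := by exact_mod_cast hm1
    have hlt : Real.log m + (-(k / n : ℝ) * t) < 0 := by
      have htgt : ((n : ℝ) / k) * Real.log m < t := by
        have := Nat.lt_floor_add_one (((n : ℝ) / k) * Real.log m)
        push_cast [ht]
        exact_mod_cast this
      have hk0 : (0:ℝ) < k := by exact_mod_cast hk
      have hn0' : (0:ℝ) < n := by exact_mod_cast hn0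
      have h1 : (n:ℝ) * Real.log m < k * t := by
        rw [div_mul_eq_mul_div, div_lt_iff₀ hk0] at htgt
        linarith [htgt]
      have : Real.log m < (k / n) * t := by
        rw [div_mul_eq_mul_div, lt_div_iff₀ hn0']
        nlinarith [h1]
      linarith
    calc (m : ℝ) * (((n : ℝ) - k) / n) ^ t ≤ m * Real.exp (-(k / n : ℝ) * t) := by
          rw [← hexp]; exact mul_le_mul_of_nonneg_left hpow (by positivity)
      _ = Real.exp (Real.log m + (-(k / n : ℝ) * t)) := by
          rw [Real.exp_add, Real.exp_log (by linarith)]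
      _ < 1 := by rw [← Real.exp_zero]; exact Real.exp_lt_exp.2 hlt
  obtain ⟨S, hScard, hShit⟩ := greedy_hit k t F hF hcond
  refine ⟨S, ?_, hShit⟩
  have : (t : ℝ) ≤ ((n : ℝ) / k) * Real.log m + 1 := by
    rw [ht]
    push_cast
    have := Nat.floor_le hval
    linarith
  calc (S.card : ℝ) ≤ t := by exact_mod_cast hScard
    _ ≤ _ := this

end Greedy

set_option maxHeartbeats 2000000 in
/-- (Folklore) There is an absolute constant `C` such that for every
`n`-vertex digraph `G` and every integer `D` with `1 ≤ D ≤ n`, there exists a shortcut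
set `H ⊆ G*` with `|H| ≤ C · (n/D)² · (log n)²` such that `dist_{G∪H}(u,v) ≤ D` for
every pair `(u,v) ∈ G*`. -/
theorem shortcut_folklore :
    ∃ C : ℝ, 0 < C ∧
      ∀ (n : ℕ) (E : Fin n → Fin n → Prop) (D : ℕ),
        1 ≤ D → D ≤ n →
        ∃ H : Finset (Fin n × Fin n),
          (∀ e ∈ H, TC E e.1 e.2) ∧
          (H.card : ℝ) ≤ C * ((n : ℝ) / (D : ℝ)) ^ 2 * (Real.log n) ^ 2 ∧
          ∀ u v : Fin n, TC E u v → dist (addE E H) u v ≤ D := by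
  classical
  refine ⟨1000, by norm_num, ?_⟩
  intro n E D hD1 hDn
  have hmono : ∀ (H : Finset (Fin n × Fin n)) (a b : Fin n), E a b → addE E H a b :=
    fun H a b h => Or.inl h
  rcases le_or_gt n 1 with hn1 | hn2
  · -- trivial case n ≤ 1
    refine ⟨∅, by simp, by simp; positivity, ?_⟩
    intro u v htc
    exact absurd (Fin.ext (by omega)) htc.1
  -- n ≥ 2
  have hn2' : (2:ℝ) ≤ n := by exact_mod_cast hn2
  have hlog2 : Real.log 2 ≤ Real.log n := Real.log_le_log (by norm_num) hn2'
  have hloghalf : (1/2 : ℝ) ≤ Real.log n := by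
    have := Real.log_two_gt_d9
    linarith
  have hD0 : (0:ℝ) < D := by exact_mod_cast hD1
  have hnD1 : (1:ℝ) ≤ (n:ℝ) / D := by
    rw [le_div_iff₀ hD0]
    have : (D:ℝ) ≤ n := by exact_mod_cast hDn
    linarith
  rcases le_or_gt D 4 with hD4 | hD5
  · -- small D : take all of TC
    set H : Finset (Fin n × Fin n) := Finset.univ.filter (fun e => TC E e.1 e.2) with hH
    refine ⟨H, fun e he => (Finset.mem_filter.1 he).2, ?_, ?_⟩
    · have h1 : (H.card : ℝ) ≤ (n:ℝ) * n := by
        have := Finset.card_filter_le (Finset.univ : Finset (Fin n × Fin n))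
          (fun e => TC E e.1 e.2)
        have h2 : (Finset.univ : Finset (Fin n × Fin n)).card = n * n := by simp
        rw [h2] at this
        exact_mod_cast this
      have hD4' : (D:ℝ) ≤ 4 := by exact_mod_cast hD4
      have h3 : (n:ℝ)/4 ≤ (n:ℝ)/D := by
        apply div_le_div_of_nonneg_left (by positivity) hD0 hD4'
      have h4 : (0:ℝ) ≤ (n:ℝ)/4 := by positivity
      have h5 : ((n:ℝ)/4)^2 ≤ ((n:ℝ)/D)^2 := pow_le_pow_left₀ h4 h3 2
      have h6 : ((1:ℝ)/2)^2 ≤ (Real.log n)^2 := pow_le_pow_left₀ (by norm_num) hloghalf 2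
      have h7 := mul_le_mul h5 h6 (by norm_num) (sq_nonneg ((n:ℝ)/D))
      nlinarith [h7]
    · intro u v htc
      have hedge : (u, v) ∈ H := Finset.mem_filter.2 ⟨Finset.mem_univ _, htc⟩
      have : IsWalk (addE E H) u v [v] := ⟨Or.inr hedge, rfl⟩
      have := dist_le_of_walk this
      simp at this
      omega
  · -- main case D ≥ 5
    have hn5 : 5 ≤ n := by omega
    set k : ℕ := (D - 1) / 2 with hk
    have hk1 : 1 ≤ k := by omega
    have hk2 : 2 * k + 1 ≤ D := by omega
    have hkD : D ≤ 4 * k := by omega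
    haveI : Nonempty (Fin n) := ⟨⟨0, by omega⟩⟩
    set Aset : Fin n → Fin n → Finset (Fin n) := fun u v =>
      Finset.univ.filter (fun w => 1 ≤ dist E u w ∧ dist E u w ≤ k ∧ Reach E w v) with hAset
    set Bset : Fin n → Fin n → Finset (Fin n) := fun x v =>
      Finset.univ.filter (fun w => w ≠ x ∧ Reach E x w ∧ 1 ≤ dist E w v ∧ dist E w v ≤ k)
      with hBset
    set F : Finset (Finset (Fin n)) :=
      ((Finset.univ : Finset (Fin n × Fin n)).filter
          (fun p => Reach E p.1 p.2 ∧ k ≤ dist E p.1 p.2)).image (fun p => Aset p.1 p.2) ∪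
      ((Finset.univ : Finset (Fin n × Fin n)).filter
          (fun p => Reach E p.1 p.2 ∧ k + 1 ≤ dist E p.1 p.2)).image (fun p => Bset p.1 p.2)
      with hF
    have hFcard : F.card ≤ 2 * (n * n) := by
      have h1 := Finset.card_union_le
        (((Finset.univ : Finset (Fin n × Fin n)).filter
          (fun p => Reach E p.1 p.2 ∧ k ≤ dist E p.1 p.2)).image (fun p => Aset p.1 p.2))
        (((Finset.univ : Finset (Fin n × Fin n)).filter
          (fun p => Reach E p.1 p.2 ∧ k + 1 ≤ dist E p.1 p.2)).image (fun p => Bset p.1 p.2))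
      have huniv : (Finset.univ : Finset (Fin n × Fin n)).card = n * n := by simp
      have h2 := le_trans (Finset.card_image_le (s := (Finset.univ : Finset (Fin n × Fin n)).filter
          (fun p => Reach E p.1 p.2 ∧ k ≤ dist E p.1 p.2)) (f := fun p => Aset p.1 p.2))
        (le_trans (Finset.card_filter_le _ _) huniv.le)
      have h3 := le_trans (Finset.card_image_le (s := (Finset.univ : Finset (Fin n × Fin n)).filter
          (fun p => Reach E p.1 p.2 ∧ k + 1 ≤ dist E p.1 p.2)) (f := fun p => Bset p.1 p.2))
        (le_trans (Finset.card_filter_le _ _) huniv.le)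
      rw [hF]
      omega
    have hFk : ∀ A ∈ F, k ≤ A.card := by
      intro A hA
      rw [hF, Finset.mem_union] at hA
      rcases hA with hA | hA
      · obtain ⟨p, hp, rfl⟩ := Finset.mem_image.1 hA
        obtain ⟨-, hreach, hdist⟩ := Finset.mem_filter.1 hp
        have : (Finset.Icc 1 k).card ≤ (Aset p.1 p.2).card := by
          apply card_le_of_rel _ _ (fun i w => dist E p.1 w = i)
          · intro i hi
            rw [Finset.mem_Icc] at hi
            obtain ⟨w, hw1, hw2, hw3, hw4⟩ := dist_split hreach (le_trans hi.2 hdist)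
            refine ⟨w, ?_, hw1⟩
            rw [hAset]
            simp only [Finset.mem_filter, Finset.mem_univ, true_and]
            exact ⟨by omega, by omega, hw4⟩
          · intro i j w _ _ h1 h2
            omega
        rwa [Nat.card_Icc, Nat.add_sub_cancel] at this
      · obtain ⟨p, hp, rfl⟩ := Finset.mem_image.1 hA
        obtain ⟨-, hreach, hdist⟩ := Finset.mem_filter.1 hp
        have : (Finset.Icc 1 k).card ≤ (Bset p.1 p.2).card := by
          apply card_le_of_rel _ _ (fun j w => dist E w p.2 = j)
          · intro j hj
            rw [Finset.mem_Icc] at hj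
            set d := dist E p.1 p.2 with hd
            obtain ⟨w, hw1, hw2, hw3, hw4⟩ := dist_split hreach
              (show d - j ≤ d by omega)
            have hwv : dist E w p.2 = j := by omega
            refine ⟨w, ?_, hwv⟩
            rw [hBset]
            simp only [Finset.mem_filter, Finset.mem_univ, true_and]
            have hwne : w ≠ p.1 := by
              intro h
              rw [h] at hw1
              have : dist E p.1 p.1 = 0 :=
                Nat.le_zero.1 (dist_le_of_walk (show IsWalk E p.1 p.1 [] from rfl))
              omega
            exact ⟨hwne, hw3, by omega, by omega⟩
          · intro i j w _ _ h1 h2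
            omega
        rwa [Nat.card_Icc, Nat.add_sub_cancel] at this
    obtain ⟨S, hScard, hShit⟩ := hitting_set k hk1 F hFk
    set H : Finset (Fin n × Fin n) := (S ×ˢ S).filter (fun e => TC E e.1 e.2) with hH
    refine ⟨H, fun e he => (Finset.mem_filter.1 he).2, ?_, ?_⟩
    · -- cardinality bound
      have hHcard : (H.card : ℝ) ≤ (S.card : ℝ) * S.card := by
        have h1 := Finset.card_filter_le (S ×ˢ S) (fun e : Fin n × Fin n => TC E e.1 e.2)
        have h2 : (S ×ˢ S).card = S.card * S.card := Finset.card_product S S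
        rw [h2] at h1
        exact_mod_cast h1
      have hcardFin : Fintype.card (Fin n) = n := Fintype.card_fin n
      rw [hcardFin] at hScard
      have hk0 : (0:ℝ) < k := by exact_mod_cast hk1
      have hn0 : (0:ℝ) < n := by linarith
      have hlogF : Real.log F.card ≤ 3 * Real.log n := by
        have hstep : Real.log F.card ≤ Real.log (2 * (n:ℝ) * n) := by
          rcases Nat.eq_zero_or_pos F.card with h0 | hpos
          · rw [h0]
            simp only [Nat.cast_zero, Real.log_zero]
            apply Real.log_nonneg
            nlinarith
          · apply Real.log_le_log (by exact_mod_cast hpos)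
            have : (F.card : ℝ) ≤ 2 * (n*n : ℕ) := by
              exact_mod_cast Nat.cast_le.2 hFcard
            push_cast at this ⊢
            linarith
        have : Real.log (2 * (n:ℝ) * n) = Real.log 2 + Real.log n + Real.log n := by
          rw [Real.log_mul (by positivity) (by positivity),
            Real.log_mul (by norm_num) (by positivity)]
        linarith
      have hlogF0 : 0 ≤ Real.log (F.card : ℝ) := Real.log_natCast_nonneg _
      have hDk : (D:ℝ) ≤ 4 * k := by exact_mod_cast hkD
      have hnk : (n:ℝ)/k ≤ 4 * ((n:ℝ)/D) := by
        rw [div_le_iff₀ hk0]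
        have h41 : (4:ℝ) * ((n:ℝ)/D) * k = 4 * (n:ℝ) * k / D := by ring
        rw [h41, le_div_iff₀ hD0]
        nlinarith [hn0.le]
      have hone : (1:ℝ) ≤ 2 * ((n:ℝ)/D) * Real.log n := by
        have := mul_le_mul hnD1 hloghalf (by norm_num) (by positivity)
        linarith
      have hS14 : (S.card : ℝ) ≤ 14 * ((n:ℝ)/D) * Real.log n := by
        have h1 : ((n:ℝ)/k) * Real.log F.card ≤ (4 * ((n:ℝ)/D)) * (3 * Real.log n) := by
          apply mul_le_mul hnk hlogF hlogF0 (by positivity)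
        calc (S.card : ℝ) ≤ ((n:ℝ)/k) * Real.log F.card + 1 := hScard
          _ ≤ (4 * ((n:ℝ)/D)) * (3 * Real.log n) + 2 * ((n:ℝ)/D) * Real.log n := by
            linarith
          _ = 14 * ((n:ℝ)/D) * Real.log n := by ring
      have hS0 : (0:ℝ) ≤ (S.card : ℝ) := Nat.cast_nonneg _
      have hx0 : (0:ℝ) ≤ 14 * ((n:ℝ)/D) * Real.log n := by
        have hd0 : (0:ℝ) ≤ (n:ℝ)/D := div_nonneg (Nat.cast_nonneg _) (Nat.cast_nonneg _)
        have hl0 : (0:ℝ) ≤ Real.log n := Real.log_natCast_nonneg _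
        nlinarith [mul_nonneg hd0 hl0]
      calc (H.card : ℝ) ≤ (S.card : ℝ) * S.card := hHcard
        _ ≤ (14 * ((n:ℝ)/D) * Real.log n) * (14 * ((n:ℝ)/D) * Real.log n) :=
          mul_le_mul hS14 hS14 hS0 hx0
        _ = 196 * ((n:ℝ)/D)^2 * (Real.log n)^2 := by ring
        _ ≤ 1000 * ((n:ℝ)/D)^2 * (Real.log n)^2 := by
          linarith [mul_nonneg (sq_nonneg ((n:ℝ)/D)) (sq_nonneg (Real.log n))]
    · -- distance bound
      intro u v htc
      obtain ⟨hne, hreach⟩ := htc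
      by_cases hdD : dist E u v ≤ D
      · obtain ⟨l, hl, hlen⟩ := exists_walk_dist hreach
        have := dist_le_of_walk (isWalk_mono (hmono H) hl)
        omega
      · have hdk : k ≤ dist E u v := by omega
        have hAmem : Aset u v ∈ F := by
          rw [hF]
          apply Finset.mem_union_left
          exact Finset.mem_image.2 ⟨(u, v),
            Finset.mem_filter.2 ⟨Finset.mem_univ _, hreach, hdk⟩, rfl⟩
        obtain ⟨s1, hs1S, hs1A⟩ := hShit _ hAmem
        rw [hAset] at hs1A
        simp only [Finset.mem_filter, Finset.mem_univ, true_and] at hs1A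
        obtain ⟨h1, h2, h3⟩ := hs1A
        have hus1 : Reach E u s1 := reach_of_dist_pos h1
        have htri : dist E u v ≤ dist E u s1 + dist E s1 v := dist_triangle hus1 h3
        have hd1 : k + 1 ≤ dist E s1 v := by omega
        have hBmem : Bset s1 v ∈ F := by
          rw [hF]
          apply Finset.mem_union_right
          exact Finset.mem_image.2 ⟨(s1, v),
            Finset.mem_filter.2 ⟨Finset.mem_univ _, h3, hd1⟩, rfl⟩
        obtain ⟨s2, hs2S, hs2B⟩ := hShit _ hBmem
        rw [hBset] at hs2B
        simp only [Finset.mem_filter, Finset.mem_univ, true_and] at hs2B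
        obtain ⟨hne2, hr2, h4, h5⟩ := hs2B
        have hHedge : (s1, s2) ∈ H := by
          rw [hH]
          exact Finset.mem_filter.2 ⟨Finset.mem_product.2 ⟨hs1S, hs2S⟩, Ne.symm hne2, hr2⟩
        have hs2v : Reach E s2 v := reach_of_dist_pos h4
        -- distances in the augmented graph
        have e1 : dist (addE E H) u s1 ≤ k := by
          obtain ⟨l, hl, hlen⟩ := exists_walk_dist hus1
          have := dist_le_of_walk (isWalk_mono (hmono H) hl)
          omega
        have e2 : dist (addE E H) s1 s2 ≤ 1 :=
          dist_le_of_walk (show IsWalk (addE E H) s1 s2 [s2] from ⟨Or.inr hHedge, rfl⟩)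
        have e3 : dist (addE E H) s2 v ≤ k := by
          obtain ⟨l, hl, hlen⟩ := exists_walk_dist hs2v
          have := dist_le_of_walk (isWalk_mono (hmono H) hl)
          omega
        have r1 : Reach (addE E H) u s1 := reach_mono (hmono H) hus1
        have r2 : Reach (addE E H) s1 s2 := ⟨[s2], Or.inr hHedge, rfl⟩
        have r3 : Reach (addE E H) s2 v := reach_mono (hmono H) hs2v
        have t2 : dist (addE E H) s1 v ≤ dist (addE E H) s1 s2 + dist (addE E H) s2 v :=
          dist_triangle r2 r3
        have t1 : dist (addE E H) u v ≤ dist (addE E H) u s1 + dist (addE E H) s1 v :=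
          dist_triangle r1 (reach_trans r2 r3)
        omega

end Paper
end
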